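/- Let p ∈ (1,∞). The function K is (weakly) decreasing on (0,1] and satisfies K(y) > 0 for every y ∈ (0,1). -/
import Mathlib


open Set Real Filter MeasureTheory

/-- `F_a(y,w)` from the paper (with parameter `p`). -/
noncomputable def Fa (p a y w : ℝ) : ℝ :=
  (8*p*(1/a + 2*y) + (2*p/a + 4*(3*p - 2)*y + 2*(p - 1)*y*w)*w) / (y^2 * (4 + (p - 1)*w))

/-- `G` is the family `a ↦ G_a` of solutions of `G_a' = -F_a(y, G_a)` on `(0,1)`
with `G_a(1) = 0`: each `G_a` is continuous on `(0,1]`, positive on `(0,1)` and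
strictly decreasing on `(0,1]`. -/
def IsGFamily (p : ℝ) (G : ℝ → ℝ → ℝ) : Prop :=
  ∀ a : ℝ, 0 < a →
    ContinuousOn (G a) (Set.Ioc 0 1) ∧
    G a 1 = 0 ∧
    (∀ y ∈ Set.Ioo (0:ℝ) 1, HasDerivAt (G a) (-(Fa p a y (G a y))) y) ∧
    (∀ y ∈ Set.Ioo (0:ℝ) 1, 0 < G a y) ∧
    StrictAntiOn (G a) (Set.Ioc 0 1)

lemma Fa_ge_four_div (p a y w : ℝ) (hp : 1 < p) (ha : 0 < a) (hy : 0 < y) (hw : 0 ≤ w) :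
    4 / y ≤ Fa p a y w := by
  have hD : 0 < y^2 * (4 + (p - 1)*w) := by
    have : 0 < 4 + (p - 1)*w := by nlinarith
    positivity
  rw [Fa, div_le_div_iff₀ hy hD]
  have hb : 0 ≤ 1/a := by positivity
  have hp0 : (0:ℝ) ≤ p - 1 := by linarith
  have hpa : 2 * p / a = 2 * p * (1/a) := by ring
  have hpa8 : 8 * p * (1/a + 2*y) = 8 * p * (1/a) + 16 * p * y := by ring
  rw [hpa, hpa8]
  generalize 1/a = b at *
  have h1 : 0 ≤ (p-1)*y^2*w^2 := by positivity
  have h2 : 0 ≤ (p-1)*(y^2*w) := by positivity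
  have h3 : 0 ≤ (p-1)*y^2 := by positivity
  have h4 : 0 ≤ y^2*w := by positivity
  have h5 : 0 ≤ p*y*b := by positivity
  have h6 : 0 ≤ p*y*b*w := by positivity
  nlinarith [h1,h2,h3,h4,h5,h6]

/-- Uniform (in `a`) lower bound `G a y ≥ -4 log y`. -/
lemma G_lower (p : ℝ) (hp : 1 < p) (G : ℝ → ℝ → ℝ) (hG : IsGFamily p G)
    (a : ℝ) (ha : 0 < a) (y : ℝ) (hy : y ∈ Set.Ioo (0:ℝ) 1) :
    -(4 * Real.log y) ≤ G a y := by
  obtain ⟨hcont, hG1, hderiv, hpos, _⟩ := hG a ha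
  set f : ℝ → ℝ := fun t => G a t + 4 * Real.log t with hf
  have hsub : Set.Icc y 1 ⊆ Set.Ioc 0 1 := fun t ht => ⟨lt_of_lt_of_le hy.1 ht.1, ht.2⟩
  have hderivf : ∀ x ∈ Set.Ioo y 1, HasDerivAt f (-(Fa p a x (G a x)) + 4 * x⁻¹) x := by
    intro x hx
    have hx0 : 0 < x := lt_trans hy.1 hx.1
    exact (hderiv x ⟨hx0, hx.2⟩).add ((Real.hasDerivAt_log hx0.ne').const_mul 4)
  have hanti : AntitoneOn f (Set.Icc y 1) := by
    have hconv : Convex ℝ (Set.Icc y 1) := convex_Icc _ _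
    have hlog : ContinuousOn (fun t => 4 * Real.log t) (Set.Icc y 1) :=
      continuousOn_const.mul (Real.continuousOn_log.mono (fun t ht =>
        Set.mem_compl_singleton_iff.2 (ne_of_gt (lt_of_lt_of_le hy.1 ht.1))))
    have hcf : ContinuousOn f (Set.Icc y 1) := (hcont.mono hsub).add hlog
    have hint : interior (Set.Icc y 1) = Set.Ioo y 1 := interior_Icc
    apply antitoneOn_of_deriv_nonpos hconv hcf
    · intro x hx
      rw [hint] at hx
      exact (hderivf x hx).differentiableAt.differentiableWithinAt
    · intro x hx
      rw [hint] at hx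
      have hx0 : 0 < x := lt_trans hy.1 hx.1
      rw [(hderivf x hx).deriv]
      have h1 : 4 / x ≤ Fa p a x (G a x) :=
        Fa_ge_four_div p a x _ hp ha hx0 (hpos x ⟨hx0, hx.2⟩).le
      rw [div_eq_mul_inv] at h1
      linarith
  have h01 : f 1 ≤ f y := hanti (Set.left_mem_Icc.2 hy.2.le)
    (Set.right_mem_Icc.2 hy.2.le) hy.2.le
  simp only [hf, hG1, Real.log_one] at h01
  linarith

theorem K_decreasing_and_positive (p : ℝ) (hp : 1 < p) (G : ℝ → ℝ → ℝ) (K : ℝ → ℝ)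
    (hG : IsGFamily p G)
    (hK : ∀ y ∈ Set.Ioc (0:ℝ) 1,
      Filter.Tendsto (fun a => G a y) Filter.atTop (nhds (K y))) :
    AntitoneOn K (Set.Ioc 0 1) ∧ ∀ y ∈ Set.Ioo (0:ℝ) 1, 0 < K y := by
  constructor
  · intro x hx z hz hxz
    refine le_of_tendsto_of_tendsto (hK z hz) (hK x hx) ?_
    filter_upwards [eventually_gt_atTop (0:ℝ)] with a ha
    rcases eq_or_lt_of_le hxz with h | h
    · simp [h]
    · exact ((hG a ha).2.2.2.2 hx hz h).le
  · intro y hy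
    have hbound : -(4 * Real.log y) ≤ K y := by
      refine ge_of_tendsto (hK y ⟨hy.1, hy.2.le⟩) ?_
      filter_upwards [eventually_gt_atTop (0:ℝ)] with a ha
      exact G_lower p hp G hG a ha y hy
    have : Real.log y < 0 := Real.log_neg hy.1 hy.2
    linarith
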